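/- For constants Aₖ > 0, Bₖ > 0, Cₖ ≥ 0 (k = 1,…,K) and a nonnegative vector ν ∈ ℝᴺ, the sum-rate function R_sum(θ₁,…,θ_K) = Σₖ log(1 + Aₖ/(Bₖ + Cₖ⟨ν, θₖ⟩)) is convex on the product of boxes {θₖ ∈ [0,1]ᴺ}, hence the attacker's sum-rate minimization over the constraint set {0 ≤ θₙ,ₖ ≤ 1, Σₖ θₙ,ₖ ≤ 1} is a convex optimization problem. -/

import Mathlib

open Set Real

/-! On `x > 0`, `log (1 + a / x) = log (x + a) - log x` has second derivative
`1 / x ^ 2 - 1 / (x + a) ^ 2 ≥ 0`. Each user's rate is this function composed with the affine map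
`θ ↦ B k + C k * ⟪ν, θ k⟫`, which is positive on the box, so the sum-rate is convex; the constraint
set is the box cut by the half-spaces `∑ k, θ k n ≤ 1`. -/

theorem convexOn_log_add_sub_log {a : ℝ} (ha : 0 ≤ a) :
    ConvexOn ℝ (Ioi 0) fun x => log (x + a) - log x := by
  refine convexOn_of_hasDerivWithinAt2_nonneg (convex_Ioi 0)
    (f' := fun x => (x + a)⁻¹ - x⁻¹) (f'' := fun x => -1 / (x + a) ^ 2 - -1 / x ^ 2)
    ?_ ?_ ?_ ?_ <;> try rw [interior_Ioi]
  all_goals intro x (hx : 0 < x)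
  all_goals have hxa : 0 < x + a := by positivity
  · exact ((continuousAt_id.add continuousAt_const).log hxa.ne').sub
      (continuousAt_log hx.ne') |>.continuousWithinAt
  · exact ((((hasDerivAt_id x).add_const a).log hxa.ne').sub
      (hasDerivAt_log hx.ne')).hasDerivWithinAt.congr_deriv (by simp [div_eq_inv_mul])
  · exact ((((hasDerivAt_id x).add_const a).inv hxa.ne').sub
      ((hasDerivAt_id x).inv hx.ne')).hasDerivWithinAt
  · have : ((x + a) ^ 2)⁻¹ ≤ (x ^ 2)⁻¹ := inv_anti₀ (by positivity) (by gcongr; linarith)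
    simp only [neg_div, one_div, sub_neg_eq_add]
    linarith

theorem convexOn_log_one_add_div {a : ℝ} (ha : 0 ≤ a) :
    ConvexOn ℝ (Ioi 0) fun x => log (1 + a / x) := by
  refine (convexOn_log_add_sub_log ha).congr fun x (hx : 0 < x) => ?_
  have : 0 < x + a := by positivity
  simp only [← log_div this.ne' hx.ne', add_div, div_self hx.ne']

theorem ConvexOn.sum {𝕜 E β ι : Type*} [Semiring 𝕜] [PartialOrder 𝕜] [AddCommMonoid E]
    [AddCommMonoid β] [PartialOrder β] [IsOrderedAddMonoid β] [SMul 𝕜 E] [Module 𝕜 β]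
    {s : Set E} {f : ι → E → β} (t : Finset ι) (hs : Convex 𝕜 s)
    (hf : ∀ i ∈ t, ConvexOn 𝕜 s (f i)) : ConvexOn 𝕜 s fun x => ∑ i ∈ t, f i x := by
  classical
  induction t using Finset.induction_on with
  | empty => simpa using convexOn_const 0 hs
  | insert i t hi ih =>
    simp only [Finset.sum_insert hi]
    exact (hf i (Finset.mem_insert_self i t)).add
      (ih fun j hj => hf j (Finset.mem_insert_of_mem hj))

theorem convexOn_log_one_add_div_add_linearMap {E : Type*} [AddCommGroup E] [Module ℝ E]
    {s : Set E} (hs : Convex ℝ s) (L : E →ₗ[ℝ] ℝ) (hL : ∀ x ∈ s, 0 ≤ L x) {a b : ℝ}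
    (ha : 0 ≤ a) (hb : 0 < b) : ConvexOn ℝ s fun x => log (1 + a / (b + L x)) :=
  (((convexOn_log_one_add_div ha).translate_right b).comp_linearMap L).subset
    (fun x hx => show 0 < b + L x by linarith [hL x hx]) hs

theorem convex_setOf_forall_le {𝕜 E β ι : Type*} [Semiring 𝕜] [PartialOrder 𝕜]
    [AddCommMonoid E] [Module 𝕜 E] [AddCommMonoid β] [PartialOrder β] [IsOrderedAddMonoid β]
    [Module 𝕜 β] [PosSMulMono 𝕜 β] (f : ι → E →ₗ[𝕜] β) (r : ι → β) :
    Convex 𝕜 {x | ∀ i, f i x ≤ r i} := by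
  simpa only [ofPred_forall] using convex_iInter fun i => convex_halfSpace_le (f i).isLinear (r i)

def rowWeightedSum {κ ι : Type*} [Fintype ι] (ν : ι → ℝ) (k : κ) : (κ → ι → ℝ) →ₗ[ℝ] ℝ where
  toFun θ := ∑ n, ν n * θ k n
  map_add' θ θ' := by simp only [Pi.add_apply, mul_add, Finset.sum_add_distrib]
  map_smul' c θ := by
    simp only [Pi.smul_apply, smul_eq_mul, Finset.mul_sum, RingHom.id_apply, mul_left_comm]

def columnSum {κ ι : Type*} [Fintype κ] (n : ι) : (κ → ι → ℝ) →ₗ[ℝ] ℝ where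
  toFun θ := ∑ k, θ k n
  map_add' θ θ' := by simp only [Pi.add_apply, Finset.sum_add_distrib]
  map_smul' c θ := by simp only [Pi.smul_apply, smul_eq_mul, Finset.mul_sum, RingHom.id_apply]

theorem convex_unitBox (κ ι : Type*) :
    Convex ℝ {θ : κ → ι → ℝ | ∀ k n, 0 ≤ θ k n ∧ θ k n ≤ 1} := by
  have : {θ : κ → ι → ℝ | ∀ k n, 0 ≤ θ k n ∧ θ k n ≤ 1} = Icc 0 1 := by
    ext θ
    simp [Pi.le_def, forall_and]
  exact this ▸ convex_Icc 0 1

theorem sum_rate_convex_problem (N K : ℕ) (A B C : Fin K → ℝ) (ν : Fin N → ℝ)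
    (hA : ∀ k, 0 < A k) (hB : ∀ k, 0 < B k) (hC : ∀ k, 0 ≤ C k)
    (hν : ∀ n, 0 ≤ ν n) :
    ConvexOn ℝ {θ : Fin K → Fin N → ℝ | ∀ k n, 0 ≤ θ k n ∧ θ k n ≤ 1}
        (fun θ => ∑ k, Real.log (1 + A k / (B k + C k * ∑ n, ν n * θ k n))) ∧
      Convex ℝ {θ : Fin K → Fin N → ℝ |
        (∀ k n, 0 ≤ θ k n ∧ θ k n ≤ 1) ∧ ∀ n, ∑ k, θ k n ≤ 1} := by
  have hbox := convex_unitBox (Fin K) (Fin N)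
  refine ⟨ConvexOn.sum _ hbox fun k _ => ?_,
    hbox.inter (convex_setOf_forall_le columnSum fun _ => 1)⟩
  refine convexOn_log_one_add_div_add_linearMap hbox (C k • rowWeightedSum ν k)
    (fun θ hθ => ?_) (hA k).le (hB k)
  show 0 ≤ C k * ∑ n, ν n * θ k n
  exact mul_nonneg (hC k) (Finset.sum_nonneg fun n _ => mul_nonneg (hν n) (hθ k n).1)
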